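/- arXiv:math/0211423 — 4 statements merged into one kernel-verified Lean document; each statement's English description precedes it below -/
import Mathlib

section
/- In a polynomial ring K[x_1,...,x_n] over a field, for nonzero polynomials f and g, the Newton polyhedron of the product satisfies N(f·g) = N(f) + N(g) (Minkowski sum). -/
open MvPolynomial
open scoped Pointwise

/-- The Newton polyhedron of a polynomial `f = Σ c_α x^α`: the convex hull of the
union of the translated positive orthants `α + ℝ_{≥0}^n` over exponents `α` with
nonzero coefficient. -/
noncomputable def newtonPolyhedron {K : Type*} [Field K] {n : ℕ}
    (f : MvPolynomial (Fin n) K) : Set (Fin n → ℝ) :=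
  convexHull ℝ
    (⋃ α ∈ f.support, {x : Fin n → ℝ | ∃ r : Fin n → ℝ,
      (∀ i, 0 ≤ r i) ∧ x = fun i => (α i : ℝ) + r i})

/-!
The Newton polyhedron is the Newton polytope `conv (supp f)` plus the nonnegative orthant, so it
suffices to prove Ostrowski's `conv (supp fg) = conv (supp f) + conv (supp g)`. The inclusion `⊆`
comes from `supp fg ⊆ supp f + supp g`. For `⊇`, by Hahn–Banach it is enough that every linear
functional `ℓ` attains its minimum over `supp f + supp g` somewhere on `supp fg`. Grading by `ℓ`,
the lowest component of `f * g` is the product of the lowest components of `f` and `g`, which is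
nonzero as there are no zero divisors.
-/

theorem Finsupp.weight_map_single_one {σ M : Type*} [AddCommMonoid M] (φ : (σ →₀ ℕ) →+ M) :
    Finsupp.weight (fun i => φ (Finsupp.single i 1)) = φ :=
  Finsupp.addHom_ext fun i k => by
    rw [Finsupp.weight_single, ← map_nsmul, Finsupp.smul_single_one]

theorem Set.Ici_zero_add_Ici_zero {α : Type*} [AddCommMonoid α] [PartialOrder α]
    [IsOrderedAddMonoid α] : Set.Ici (0 : α) + Set.Ici 0 = Set.Ici 0 :=
  ((Set.Ici_add_Ici_subset 0 0).trans (by rw [add_zero])).antisymm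
    fun x hx => ⟨x, hx, 0, le_rfl, add_zero x⟩

theorem convexHull_subset_convexHull_of_forall_exists_le {E : Type*} [AddCommGroup E]
    [Module ℝ E] [TopologicalSpace E] [IsTopologicalAddGroup E] [ContinuousSMul ℝ E]
    [LocallyConvexSpace ℝ E] [T2Space E] {s t : Set E} (ht : t.Finite)
    (h : ∀ ℓ : StrongDual ℝ E, ∀ x ∈ s, ∃ y ∈ t, ℓ y ≤ ℓ x) :
    convexHull ℝ s ⊆ convexHull ℝ t := by
  intro x hx
  by_contra hxt
  obtain ⟨ℓ, u, hℓx, hℓt⟩ := geometric_hahn_banach_point_closed (convex_convexHull ℝ t)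
    (ht.isCompact_convexHull ℝ).isClosed hxt
  have hs : s ⊆ {z | u < ℓ z} := fun z hz => by
    obtain ⟨y, hy, hyz⟩ := h ℓ z hz
    exact (hℓt y (subset_convexHull ℝ t hy)).trans_le hyz
  exact (convexHull_min hs (convex_halfSpace_gt ℓ.isLinear u) hx).not_gt hℓx

namespace MvPolynomial

open Finsupp (weight single)

section WeightedHomogeneousComponent

variable {σ R M : Type*} [CommSemiring R] [AddCommMonoid M] [LinearOrder M]
  [IsOrderedCancelAddMonoid M] {w : σ → M}

theorem weightedHomogeneousComponent_mul_of_le {f g : MvPolynomial σ R} {a b : M}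
    (hf : ∀ d ∈ f.support, a ≤ weight w d) (hg : ∀ d ∈ g.support, b ≤ weight w d) :
    weightedHomogeneousComponent w (a + b) (f * g) =
      weightedHomogeneousComponent w a f * weightedHomogeneousComponent w b g := by
  classical
  ext c
  rw [coeff_weightedHomogeneousComponent]
  split_ifs with hc
  · rw [coeff_mul, coeff_mul]
    refine Finset.sum_congr rfl fun ⟨p, q⟩ hpq => ?_
    rw [Finset.HasAntidiagonal.mem_antidiagonal] at hpq
    simp only [coeff_weightedHomogeneousComponent]
    by_cases hp : coeff p f = 0
    · simp [hp]
    by_cases hq : coeff q g = 0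
    · simp [hq]
    have hsum : weight w p + weight w q = a + b := by rw [← map_add, hpq, hc]
    obtain ⟨hpa, hqb⟩ := (add_eq_add_iff_eq_and_eq (hf p (mem_support_iff.2 hp))
      (hg q (mem_support_iff.2 hq))).1 hsum.symm
    rw [if_pos hpa.symm, if_pos hqb.symm]
  · exact (((weightedHomogeneousComponent_isWeightedHomogeneous a f).mul
      (weightedHomogeneousComponent_isWeightedHomogeneous b g)).coeff_eq_zero c hc).symm

theorem exists_mem_support_mul_weight_le [NoZeroDivisors R] {f g : MvPolynomial σ R}
    {p q : σ →₀ ℕ} (hp : p ∈ f.support) (hq : q ∈ g.support) :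
    ∃ c ∈ (f * g).support, weight w c ≤ weight w p + weight w q := by
  classical
  obtain ⟨a, ha, haMin⟩ := f.support.exists_min_image (weight w) ⟨p, hp⟩
  obtain ⟨b, hb, hbMin⟩ := g.support.exists_min_image (weight w) ⟨q, hq⟩
  have hcomponent_ne_zero {h : MvPolynomial σ R} {d : σ →₀ ℕ} (hd : d ∈ h.support) :
      weightedHomogeneousComponent w (weight w d) h ≠ 0 :=
    ne_zero_iff.2 ⟨d, by rwa [coeff_weightedHomogeneousComponent, if_pos rfl, ← mem_support_iff]⟩
  have hprod := mul_ne_zero (hcomponent_ne_zero ha) (hcomponent_ne_zero hb)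
  rw [← weightedHomogeneousComponent_mul_of_le haMin hbMin] at hprod
  obtain ⟨c, hc⟩ := ne_zero_iff.1 hprod
  rw [coeff_weightedHomogeneousComponent] at hc
  split_ifs at hc with hwc
  · exact ⟨c, mem_support_iff.2 hc, hwc ▸ add_le_add (haMin p hp) (hbMin q hq)⟩
  · exact absurd rfl hc

end WeightedHomogeneousComponent

variable {σ R : Type*} [CommSemiring R]

variable (σ) in
noncomputable def exponentVec : (σ →₀ ℕ) →+ (σ → ℝ) :=
  AddMonoidHom.pi fun i => (Nat.castAddMonoidHom ℝ).comp (Finsupp.applyAddHom i)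

noncomputable def newtonPolytope (f : MvPolynomial σ R) : Set (σ → ℝ) :=
  convexHull ℝ (exponentVec σ '' f.support)

theorem newtonPolytope_mul [NoZeroDivisors R] (f g : MvPolynomial σ R) :
    newtonPolytope (f * g) = newtonPolytope f + newtonPolytope g := by
  classical
  rw [newtonPolytope, newtonPolytope, newtonPolytope, ← convexHull_add, ← Set.image_add,
    ← Finset.coe_add]
  refine (convexHull_mono (Set.image_mono (support_mul f g))).antisymm ?_
  refine convexHull_subset_convexHull_of_forall_exists_le
    ((f * g).support.finite_toSet.image _) ?_
  rintro ℓ _ ⟨d, hd, rfl⟩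
  obtain ⟨p, hp, q, hq, rfl⟩ := Finset.mem_add.1 hd
  let φ : (σ →₀ ℕ) →+ ℝ := (ℓ : (σ → ℝ) →+ ℝ).comp (exponentVec σ)
  obtain ⟨c, hc, hcφ⟩ := exists_mem_support_mul_weight_le (w := fun i => φ (single i 1)) hp hq
  rw [Finsupp.weight_map_single_one, ← map_add] at hcφ
  exact ⟨_, ⟨c, hc, rfl⟩, hcφ⟩

end MvPolynomial

theorem newtonPolyhedron_eq_newtonPolytope_add_Ici {K : Type*} [Field K] {n : ℕ}
    (f : MvPolynomial (Fin n) K) : newtonPolyhedron f = newtonPolytope f + Set.Ici 0 := by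
  have horthants : (⋃ α ∈ f.support, {x : Fin n → ℝ | ∃ r : Fin n → ℝ,
      (∀ i, 0 ≤ r i) ∧ x = fun i => (α i : ℝ) + r i}) =
      exponentVec (Fin n) '' f.support + Set.Ici 0 := by
    ext x
    rw [Set.mem_iUnion₂]
    constructor
    · rintro ⟨α, hα, r, hr, rfl⟩
      exact Set.add_mem_add ⟨α, hα, rfl⟩ hr
    · rintro ⟨_, ⟨α, hα, rfl⟩, r, hr, rfl⟩
      exact ⟨α, hα, r, hr, rfl⟩
  rw [newtonPolyhedron, horthants, convexHull_add, (convex_Ici 0).convexHull_eq, newtonPolytope]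

theorem newtonPolyhedron_mul_general {K : Type*} [Field K] {n : ℕ}
    (f g : MvPolynomial (Fin n) K) :
    newtonPolyhedron (f * g) = newtonPolyhedron f + newtonPolyhedron g := by
  simp only [newtonPolyhedron_eq_newtonPolytope_add_Ici, newtonPolytope_mul]
  rw [add_add_add_comm, Set.Ici_zero_add_Ici_zero]

/-- For nonzero polynomials `f, g` over a field, the Newton polyhedron of the
product is the Minkowski sum of the Newton polyhedra:  `N(f·g) = N(f) + N(g)`. -/
theorem newtonPolyhedron_mul {K : Type*} [Field K] {n : ℕ}
    (f g : MvPolynomial (Fin n) K) (hf : f ≠ 0) (hg : g ≠ 0) :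
    newtonPolyhedron (f * g) = newtonPolyhedron f + newtonPolyhedron g :=
  newtonPolyhedron_mul_general f g
end

section
/- With notation as above (J ⊆ (x_1,...,x_k)^d = I(Z)^d, d = ord_0 J, blowup chart substitution), the weak transform J^∨ := x_1^{-d}·J^* satisfies ord_a'(J^∨) ≤ d at every point a' of the exceptional divisor x_1 = 0 lying over the origin. -/
open MvPolynomial

/-- The order of a polynomial: the least total degree of a nonzero term. -/
noncomputable def polyOrd {K : Type*} [Field K] {n : ℕ} (f : MvPolynomial (Fin n) K) : ℕ∞ :=
  sInf {d : ℕ∞ | ∃ m : Fin n →₀ ℕ, (↑(m.sum fun _ e => e) = d) ∧ MvPolynomial.coeff m f ≠ 0}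

/-- The order of a polynomial at the point `a` (order after translating `a` to the origin). -/
noncomputable def polyOrdAt {K : Type*} [Field K] {n : ℕ} (a : Fin n → K)
    (f : MvPolynomial (Fin n) K) : ℕ∞ :=
  polyOrd (MvPolynomial.aeval (fun i => MvPolynomial.X i + MvPolynomial.C (a i)) f)

/-- The order of an ideal at a point. -/
noncomputable def idealOrdAt {K : Type*} [Field K] {n : ℕ} (a : Fin n → K)
    (J : Ideal (MvPolynomial (Fin n) K)) : ℕ∞ :=
  ⨅ f : J, polyOrdAt a (f : MvPolynomial (Fin n) K)

/-- The blowup chart substitution `x_1 ↦ x_1`, `x_i ↦ x_1·x_i` (`2 ≤ i ≤ k`),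
`x_i ↦ x_i` (`i > k`), with `x_1` the variable of index `0`. -/
noncomputable def chartSubst {K : Type*} [Field K] {n : ℕ} (k : ℕ) :
    MvPolynomial (Fin (n + 1)) K →+* MvPolynomial (Fin (n + 1)) K :=
  (MvPolynomial.aeval (fun i : Fin (n + 1) =>
    if 1 ≤ (i : ℕ) ∧ (i : ℕ) < k then MvPolynomial.X 0 * MvPolynomial.X i
    else MvPolynomial.X i)).toRingHom

/-!
Take `f ∈ J` of order `d` at the origin. As `J ⊆ (x_1, …, x_k)^d` and the chart sends each
`x_i`, `i ≤ k`, into `(x_1)`, the total transform of `f` is `x_1^d g` with `g ∈ J^∨`. The chart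
maps monomials injectively to monomials and at most doubles their degree, so a monomial of `f`
of degree `≤ d` gives a monomial of `g` of degree `≤ d`. For the point `a'` of the exceptional
divisor: translating by `a'` after the chart is the chart after the shear
`x_i ↦ x_i + a'_i x_1`, an order-preserving linear change of coordinates, so the translate of `g`
is the weak transform of the sheared `f` and the same count applies.
-/

section

variable {K : Type*} [Field K] {n : ℕ}

lemma polyOrd_le_iff {f : MvPolynomial (Fin n) K} {d : ℕ} :
    polyOrd f ≤ d ↔ ∃ m ∈ f.support, m.degree ≤ d := by
  rw [← ENat.lt_add_one_iff (ENat.natCast_ne_top d), polyOrd, sInf_lt_iff]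
  constructor
  · rintro ⟨_, ⟨m, rfl, hm⟩, hmd⟩
    exact ⟨m, mem_support_iff.2 hm, Nat.lt_succ_iff.1 (by exact_mod_cast hmd)⟩
  · rintro ⟨m, hm, hmd⟩
    exact ⟨_, ⟨m, rfl, mem_support_iff.1 hm⟩, by exact_mod_cast Nat.lt_add_one_of_le hmd⟩

lemma le_polyOrd_iff {f : MvPolynomial (Fin n) K} {d : ℕ} :
    d ≤ polyOrd f ↔ f ∈ idealOfVars (Fin n) K ^ d := by
  rw [mem_pow_idealOfVars_iff, polyOrd, le_sInf_iff]
  constructor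
  · intro h m hm
    exact_mod_cast h _ ⟨m, rfl, mem_support_iff.1 hm⟩
  · rintro h _ ⟨m, rfl, hm⟩
    exact_mod_cast h m (mem_support_iff.2 hm)

lemma polyOrd_le_polyOrd_aeval {l : ℕ} {g : Fin n → MvPolynomial (Fin l) K}
    (hg : ∀ i, g i ∈ idealOfVars (Fin l) K) (f : MvPolynomial (Fin n) K) :
    polyOrd f ≤ polyOrd (aeval g f) := by
  have hmap : (idealOfVars (Fin n) K).map (aeval g) ≤ idealOfVars (Fin l) K := by
    rw [Ideal.map_span, Ideal.span_le]
    rintro _ ⟨_, ⟨i, rfl⟩, rfl⟩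
    simpa using hg i
  refine ENat.forall_natCast_le_iff_le.1 fun d hd => le_polyOrd_iff.2 ?_
  have hfmap := Ideal.mem_map_of_mem (aeval (R := K) g) (le_polyOrd_iff.1 hd)
  rw [Ideal.map_pow] at hfmap
  exact Ideal.pow_right_mono hmap d hfmap

lemma polyOrdAt_zero (f : MvPolynomial (Fin n) K) : polyOrdAt 0 f = polyOrd f := by
  simp [polyOrdAt]

lemma idealOrdAt_le_polyOrdAt {a : Fin n → K} {I : Ideal (MvPolynomial (Fin n) K)}
    {f : MvPolynomial (Fin n) K} (hf : f ∈ I) : idealOrdAt a I ≤ polyOrdAt a f :=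
  iInf_le (fun f : I => polyOrdAt a (f : MvPolynomial (Fin n) K)) ⟨f, hf⟩

lemma exists_mem_polyOrdAt_eq_idealOrdAt (a : Fin n → K) (I : Ideal (MvPolynomial (Fin n) K)) :
    ∃ f ∈ I, polyOrdAt a f = idealOrdAt a I := by
  obtain ⟨⟨f, hf⟩, hfI⟩ := ciInf_mem fun f : I => polyOrdAt a (f : MvPolynomial (Fin n) K)
  exact ⟨f, hf, hfI⟩

def chartWeight (k : ℕ) (i : Fin (n + 1)) : ℕ := if 1 ≤ (i : ℕ) ∧ (i : ℕ) < k then 1 else 0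

noncomputable def chartExponent (k : ℕ) : (Fin (n + 1) →₀ ℕ) →+ (Fin (n + 1) →₀ ℕ) :=
  AddMonoidHom.id _ + (Finsupp.singleAddHom 0).comp (Finsupp.weight (chartWeight k))

lemma chartExponent_apply (k : ℕ) (m : Fin (n + 1) →₀ ℕ) :
    chartExponent k m = m + Finsupp.single 0 (Finsupp.weight (chartWeight k) m) := rfl

lemma chartSubst_apply (k : ℕ) (f : MvPolynomial (Fin (n + 1)) K) :
    chartSubst k f = aeval (fun i => X 0 ^ chartWeight k i * X i) f := by
  simp only [chartSubst, AlgHom.toRingHom_eq_coe, RingHom.coe_coe]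
  congr
  funext i
  unfold chartWeight
  split_ifs <;> simp

lemma chartSubst_X (k : ℕ) (i : Fin (n + 1)) :
    chartSubst k (X i : MvPolynomial (Fin (n + 1)) K) = X 0 ^ chartWeight k i * X i := by
  rw [chartSubst_apply, aeval_X]

lemma chartSubst_monomial (k : ℕ) (m : Fin (n + 1) →₀ ℕ) (c : K) :
    chartSubst k (monomial m c) = monomial (chartExponent k m) c := by
  induction m using Finsupp.induction generalizing c with
  | zero => simp [chartSubst]
  | single_add i e m _ _ ih =>
    have hX : chartSubst k (monomial (Finsupp.single i e) (1 : K)) =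
        monomial (chartExponent k (Finsupp.single i e)) 1 := by
      rw [← X_pow_eq_monomial, map_pow, chartSubst_X, mul_pow, ← pow_mul, X_pow_eq_monomial,
        X_pow_eq_monomial, monomial_mul, one_mul, chartExponent_apply,
        Finsupp.weight_single, smul_eq_mul, add_comm (Finsupp.single 0 _), mul_comm]
    rw [← one_mul c, ← monomial_mul, map_mul, ih, hX, map_add, monomial_mul]

lemma weight_chartExponent (k : ℕ) (m : Fin (n + 1) →₀ ℕ) :
    Finsupp.weight (chartWeight k) (chartExponent k m) = Finsupp.weight (chartWeight k) m := by
  simp [chartExponent_apply, Finsupp.weight_single, chartWeight]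

lemma chartExponent_injective (k : ℕ) : Function.Injective (chartExponent (n := n) k) := by
  intro m m' h
  have hw := congrArg (Finsupp.weight (chartWeight k)) h
  rw [weight_chartExponent, weight_chartExponent] at hw
  rw [chartExponent_apply, chartExponent_apply, hw] at h
  exact add_right_cancel h

lemma degree_chartExponent_le (k : ℕ) (m : Fin (n + 1) →₀ ℕ) :
    (chartExponent k m).degree ≤ 2 * m.degree := by
  rw [chartExponent_apply, map_add, Finsupp.degree_single, two_mul, Finsupp.degree_eq_weight_one]
  gcongr
  rw [Finsupp.weight_eq_sum, Finsupp.weight_eq_sum]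
  refine Finset.sum_le_sum fun i _ => ?_
  unfold chartWeight
  split_ifs <;> simp

lemma coeff_chartSubst_chartExponent (k : ℕ) (f : MvPolynomial (Fin (n + 1)) K)
    (m : Fin (n + 1) →₀ ℕ) : coeff (chartExponent k m) (chartSubst k f) = coeff m f := by
  conv_lhs => rw [f.as_sum, map_sum]
  simp [chartSubst_monomial, coeff_sum, coeff_monomial, (chartExponent_injective k).eq_iff,
    eq_comm]

lemma polyOrd_le_of_X_pow_mul_eq_chartSubst {k d : ℕ} {f g : MvPolynomial (Fin (n + 1)) K}
    (hfg : X 0 ^ d * g = chartSubst k f) (hf : polyOrd f ≤ d) : polyOrd g ≤ d := by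
  obtain ⟨m, hm, hmd⟩ := polyOrd_le_iff.1 hf
  have hcoeff : coeff (chartExponent k m) (X 0 ^ d * g) ≠ 0 := by
    rwa [hfg, coeff_chartSubst_chartExponent, ← mem_support_iff]
  rw [X_pow_eq_monomial, coeff_monomial_mul'] at hcoeff
  split_ifs at hcoeff with hle
  · refine polyOrd_le_iff.2 ⟨_, mem_support_iff.2 (by simpa using hcoeff), ?_⟩
    have hdeg := congrArg Finsupp.degree (tsub_add_cancel_of_le hle)
    rw [map_add, Finsupp.degree_single] at hdeg
    have := degree_chartExponent_le k m
    omega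
  · exact absurd rfl hcoeff

lemma X_zero_pow_dvd_chartSubst {k d : ℕ} {f : MvPolynomial (Fin (n + 1)) K}
    (hf : f ∈ Ideal.span {g | ∃ i : Fin (n + 1), (i : ℕ) < k ∧ g = X i} ^ d) :
    X 0 ^ d ∣ chartSubst k f := by
  have hmap : (Ideal.span {g | ∃ i : Fin (n + 1), (i : ℕ) < k ∧ g = X i}).map (chartSubst k) ≤
      Ideal.span {(X 0 : MvPolynomial (Fin (n + 1)) K)} := by
    rw [Ideal.map_span, Ideal.span_le]
    rintro _ ⟨_, ⟨i, hi, rfl⟩, rfl⟩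
    rw [chartSubst_X, SetLike.mem_coe, Ideal.mem_span_singleton, chartWeight]
    split_ifs with h
    · exact dvd_mul_of_dvd_left (dvd_pow_self _ one_ne_zero) _
    · obtain rfl : i = 0 := Fin.ext (by rw [Fin.val_zero]; omega)
      exact dvd_mul_left _ _
  have hfmap := Ideal.mem_map_of_mem (chartSubst k) hf
  rw [Ideal.map_pow] at hfmap
  rw [← Ideal.mem_span_singleton, ← Ideal.span_singleton_pow]
  exact Ideal.pow_right_mono hmap d hfmap

noncomputable def shear (a : Fin (n + 1) → K) :
    MvPolynomial (Fin (n + 1)) K →ₐ[K] MvPolynomial (Fin (n + 1)) K :=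
  aeval fun i => X i + C (a i) * X 0

lemma shear_neg_shear {a : Fin (n + 1) → K} (ha : a 0 = 0) (f : MvPolynomial (Fin (n + 1)) K) :
    shear (-a) (shear a f) = f := by
  rw [← AlgHom.comp_apply, show (shear (-a)).comp (shear a) = AlgHom.id K _ from
    algHom_ext fun i => by simp [shear, ha]]
  rfl

lemma polyOrd_shear {a : Fin (n + 1) → K} (ha : a 0 = 0) (f : MvPolynomial (Fin (n + 1)) K) :
    polyOrd (shear a f) = polyOrd f := by
  have hmem (b : Fin (n + 1) → K) (i : Fin (n + 1)) :
      X i + C (b i) * X 0 ∈ idealOfVars (Fin (n + 1)) K :=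
    add_mem (Ideal.subset_span ⟨i, rfl⟩) (Ideal.mul_mem_left _ _ (Ideal.subset_span ⟨0, rfl⟩))
  refine le_antisymm ?_ (polyOrd_le_polyOrd_aeval (hmem a) f)
  conv_rhs => rw [← shear_neg_shear ha f]
  exact polyOrd_le_polyOrd_aeval (hmem (-a)) _

lemma chartSubst_shear {k : ℕ} {a : Fin (n + 1) → K} (ha0 : a 0 = 0)
    (hak : ∀ i : Fin (n + 1), k ≤ (i : ℕ) → a i = 0) (f : MvPolynomial (Fin (n + 1)) K) :
    chartSubst k (shear a f) = aeval (fun i => X i + C (a i)) (chartSubst k f) := by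
  rw [chartSubst_apply, chartSubst_apply, ← AlgHom.comp_apply, ← AlgHom.comp_apply]
  refine DFunLike.congr_fun (algHom_ext fun i => ?_) f
  simp only [shear, chartWeight, AlgHom.comp_apply, aeval_X, map_add, map_mul, map_pow,
    aeval_C, algebraMap_eq]
  rw [ha0, C_0, add_zero,
    if_neg (show ¬(1 ≤ ((0 : Fin (n + 1)) : ℕ) ∧ ((0 : Fin (n + 1)) : ℕ) < k) by simp)]
  split_ifs with h
  · ring
  · have hai : a i = 0 := by
      rcases Nat.eq_zero_or_pos i with hi | hi
      · rw [show i = 0 from Fin.ext hi, ha0]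
      · exact hak i (by omega)
    simp [hai]

end

theorem weakTransform_order_le_general {K : Type*} [Field K] {n : ℕ} (k : ℕ)
    (J : Ideal (MvPolynomial (Fin (n + 1)) K)) (d : ℕ)
    (hord : idealOrdAt (0 : Fin (n + 1) → K) J = d)
    (hJ : J ≤ (Ideal.span {g : MvPolynomial (Fin (n + 1)) K |
        ∃ i : Fin (n + 1), (i : ℕ) < k ∧ g = MvPolynomial.X i}) ^ d)
    (a' : Fin (n + 1) → K) (ha'exc : a' 0 = 0)
    (ha'orig : ∀ i : Fin (n + 1), k ≤ (i : ℕ) → a' i = 0) :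
    idealOrdAt a'
      (Submodule.colon (Ideal.map (chartSubst k) J)
        ((Ideal.span {MvPolynomial.X 0 ^ d} : Ideal (MvPolynomial (Fin (n + 1)) K)) :
          Set (MvPolynomial (Fin (n + 1)) K))) ≤ (d : ℕ∞) := by
  obtain ⟨f, hfJ, hf⟩ := exists_mem_polyOrdAt_eq_idealOrdAt 0 J
  rw [hord, polyOrdAt_zero] at hf
  obtain ⟨g, hg⟩ := X_zero_pow_dvd_chartSubst (hJ hfJ)
  have htranslate : X 0 ^ d * aeval (fun i => X i + C (a' i)) g = chartSubst k (shear a' f) := by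
    rw [chartSubst_shear ha'exc ha'orig, hg, map_mul, map_pow]
    simp [ha'exc]
  refine (idealOrdAt_le_polyOrdAt (f := g) ?_).trans
    (polyOrd_le_of_X_pow_mul_eq_chartSubst htranslate ((polyOrd_shear ha'exc f).trans_le hf.le))
  rw [Submodule.mem_colon_span_singleton, smul_eq_mul, mul_comm, ← hg]
  exact Ideal.mem_map_of_mem _ hfJ

/-- Let `J ⊆ I(Z)^d` with `Z = {x_1 = ... = x_k = 0}` and `d = ord_0 J > 0`.  The weak
transform `J^∨ = x_1^{-d}·J^*` under the blowup chart has order `≤ d` at every point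
`a'` of the exceptional divisor `x_1 = 0` lying over the origin. -/
theorem weakTransform_order_le {K : Type*} [Field K] {n : ℕ} (k : ℕ)
    (hk : 1 ≤ k) (hkn : k ≤ n + 1)
    (J : Ideal (MvPolynomial (Fin (n + 1)) K)) (d : ℕ) (hd : 0 < d)
    (hord : idealOrdAt (0 : Fin (n + 1) → K) J = d)
    (hJ : J ≤ (Ideal.span {g : MvPolynomial (Fin (n + 1)) K |
        ∃ i : Fin (n + 1), (i : ℕ) < k ∧ g = MvPolynomial.X i}) ^ d)
    (a' : Fin (n + 1) → K) (ha'exc : a' 0 = 0)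
    (ha'orig : ∀ i : Fin (n + 1), k ≤ (i : ℕ) → a' i = 0) :
    idealOrdAt a'
      (Submodule.colon (Ideal.map (chartSubst k) J)
        ((Ideal.span {MvPolynomial.X 0 ^ d} : Ideal (MvPolynomial (Fin (n + 1)) K)) :
          Set (MvPolynomial (Fin (n + 1)) K))) ≤ (d : ℕ∞) :=
  weakTransform_order_le_general k J d hord hJ a' ha'exc ha'orig
end

section
/- Let f, g be nonzero elements of K[[x, y_1,...,y_{n−1}]] with orders c_P = ord(f), c_Q = ord(g), and let e_f, e_g, e_{fg} ∈ ℚ_{≥0} ∪ {∞} denote the orders (at the origin, in the y-variables) of the projected Newton polyhedra of f, g, f·g under the projection from (c_P,0,...,0), (c_Q,0,...,0), (c_P+c_Q,0,...,0) respectively, defined by sending a point (j,γ) with j < c to (c/(c−j))·γ. Then e_{fg}/(c_P+c_Q) = min{ e_f/c_P, e_g/c_Q }. -/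
noncomputable section

open scoped ENNReal

variable {K : Type*} [Field K] {m : ℕ}

/-- `K[[x, y_1, ..., y_{n-1}]]` viewed as power series in `x` over `A = K[[y]]`. -/
abbrev PS (K : Type*) [Field K] (m : ℕ) := PowerSeries (MvPowerSeries (Fin m) K)

/-- The total order of `h = Σ_j a_j(y) x^j`: `min_j (j + ord a_j)`. -/
def ordT (h : PS K m) : ℝ≥0∞ :=
  ⨅ j : ℕ, ((j : ℝ≥0∞) +
    ((MvPowerSeries.order (PowerSeries.coeff (R := MvPowerSeries (Fin m) K) j h) : ℕ∞) : ℝ≥0∞))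

/-- The normalized order of the projected Newton polyhedron of `h` (order `c`):
`e_h = min_{j<c} (c/(c−j))·ord(a_{h,j})`. -/
def eOrd (h : PS K m) (c : ℕ) : ℝ≥0∞ :=
  ⨅ j : ℕ, ⨅ _ : j < c,
    ((c : ℝ≥0∞) / ((c : ℝ≥0∞) - (j : ℝ≥0∞))) *
      ((MvPowerSeries.order (PowerSeries.coeff (R := MvPowerSeries (Fin m) K) j h) : ℕ∞) : ℝ≥0∞)

/-! For `p/q ≥ 1`, the inequality `p/q ≤ e_h/c` says that every monomial `x^j y^d` of `h`
with `j < c` satisfies `p (c - j) ≤ q |d|`, i.e. that the weighted order `ν_{p,q}(h)` of `h` for the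
weights `p` on `x` and `q` on the `yᵢ` is at least `p c`. Since `h` has a monomial of total degree
`c = ord h` and `q ≤ p`, also `ν_{p,q}(h) ≤ p c`. The weighted order is additive on products, so
`p (c_P + c_Q) ≤ ν_{p,q}(f) + ν_{p,q}(g)` holds iff both `p c_P ≤ ν_{p,q}(f)` and
`p c_Q ≤ ν_{p,q}(g)`. Thus `e_{fg}/(c_P + c_Q)` and `min (e_f/c_P) (e_g/c_Q)` lie above the same
rationals `≥ 1`; both are `≥ 1`, so they are equal. -/

theorem ENat.natCast_add_le_add_iff {a b : ℕ∞} {k l : ℕ} (ha : a ≤ k) (hb : b ≤ l) :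
    ((k + l : ℕ) : ℕ∞) ≤ a + b ↔ (k : ℕ∞) ≤ a ∧ (l : ℕ∞) ≤ b := by
  lift a to ℕ using ne_top_of_le_ne_top (ENat.natCast_ne_top k) ha
  lift b to ℕ using ne_top_of_le_ne_top (ENat.natCast_ne_top l) hb
  norm_cast at *
  omega

theorem ENNReal.natCast_div_le_div_natCast_iff {p q k : ℕ} (hq : q ≠ 0) (hk : k ≠ 0) (o : ℕ∞) :
    (p : ℝ≥0∞) / q ≤ (o : ℝ≥0∞) / k ↔ ((p * k : ℕ) : ℕ∞) ≤ q * o := by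
  rw [ENNReal.div_le_iff_le_mul (Or.inl (by exact_mod_cast hq)) (Or.inl (by simp)), mul_comm,
    ← mul_div_assoc, ENNReal.le_div_iff_mul_le (Or.inl (by exact_mod_cast hk)) (Or.inl (by simp)),
    ← ENat.toENNReal_le]
  push_cast
  rfl

theorem ENNReal.exists_natCast_div_btwn {a b : ℝ≥0∞} (hab : a < b) :
    ∃ p q : ℕ, q ≠ 0 ∧ a < (p : ℝ≥0∞) / q ∧ (p : ℝ≥0∞) / q < b := by
  obtain ⟨r, hr, har, hrb⟩ := ENNReal.lt_iff_exists_rat_btwn.mp hab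
  have hr' : ((r : ℝ).toNNReal : ℝ≥0∞) = (r.num.toNat : ℝ≥0∞) / r.den := by
    change ENNReal.ofReal r = _
    have hnum : ((r.num.toNat : ℕ) : ℝ) = r.num := by
      exact_mod_cast Int.toNat_of_nonneg (Rat.num_nonneg.mpr hr)
    rw [Rat.cast_def, ← hnum, ENNReal.ofReal_div_of_pos (by simpa using r.pos),
      ENNReal.ofReal_natCast, ENNReal.ofReal_natCast]
  exact ⟨r.num.toNat, r.den, r.den_nz, hr' ▸ har, hr' ▸ hrb⟩

theorem ENNReal.eq_of_forall_natCast_div_le_iff {a b : ℝ≥0∞} (ha : 1 ≤ a) (hb : 1 ≤ b)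
    (H : ∀ p q : ℕ, q ≠ 0 → q ≤ p → ((p : ℝ≥0∞) / q ≤ a ↔ (p : ℝ≥0∞) / q ≤ b)) : a = b := by
  wlog hab : a < b generalizing a b
  · rcases (not_lt.mp hab).eq_or_lt with h | h
    · exact h.symm
    · exact (this hb ha (fun p q hq hqp => (H p q hq hqp).symm) h).symm
  obtain ⟨p, q, hq, hap, hpb⟩ := ENNReal.exists_natCast_div_btwn hab
  have hqp : q ≤ p := by
    have h1 : 1 < (p : ℝ≥0∞) / q := ha.trans_lt hap
    rw [ENNReal.lt_div_iff_mul_lt (Or.inl (by exact_mod_cast hq)) (Or.inl (by simp)), one_mul] at h1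
    exact_mod_cast h1.le
  exact absurd ((H p q hq hqp).mpr hpb.le) hap.not_ge

theorem Finsupp.degree_option {σ : Type*} (d : Option σ →₀ ℕ) :
    d.degree = d none + d.some.degree := by
  simpa [Finsupp.degree_eq_weight_one, Finsupp.weight_apply] using
    Finsupp.sum_option_index_smul d (1 : Option σ → ℕ)

namespace MvPowerSeries

variable {σ R : Type*}

/-- Under `optionEquivLeft`, the variable `none` is `x` and `some i` is `yᵢ`. -/
def optionWeight (p q : ℕ) : Option σ → ℕ := fun i => i.elim p fun _ => q

theorem weight_optionWeight (p q : ℕ) (d : Option σ →₀ ℕ) :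
    Finsupp.weight (optionWeight p q) d = p * d none + q * d.some.degree := by
  rw [Finsupp.weight_apply, Finsupp.sum_option_index_smul, Finsupp.degree_eq_weight_one,
    Finsupp.weight_apply, Finsupp.mul_sum]
  simp [optionWeight, mul_comm]

theorem optionWeight_one_one : optionWeight (σ := σ) 1 1 = fun _ => 1 :=
  funext fun i => by cases i <;> rfl

theorem optionWeight_le {p q : ℕ} (hqp : q ≤ p) (i : Option σ) : optionWeight p q i ≤ p := by
  cases i
  exacts [le_rfl, hqp]

theorem weightedOrder_le_mul_order [Semiring R] {w : σ → ℕ} {p : ℕ} (hw : ∀ i, w i ≤ p)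
    {f : MvPowerSeries σ R} (hf : f ≠ 0) : f.weightedOrder w ≤ p * f.order := by
  obtain ⟨d, hd, hdeg⟩ := exists_coeff_ne_zero_and_order (ne_zero_iff_order_finite.mp hf)
  have hwd : Finsupp.weight w d ≤ p * d.degree := by
    rw [Finsupp.weight_apply, Finsupp.degree_apply, Finsupp.sum, Finset.mul_sum]
    exact Finset.sum_le_sum fun i _ => by
      rw [smul_eq_mul, mul_comm]
      exact Nat.mul_le_mul_right _ (hw i)
  calc f.weightedOrder w ≤ Finsupp.weight w d := weightedOrder_le w hd
    _ ≤ (p * d.degree : ℕ) := by exact_mod_cast hwd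
    _ = p * f.order := by rw [← hdeg]; push_cast; rfl

theorem weightedOrder_optionWeight_le [Semiring R] {F : MvPowerSeries (Option σ) R} {p q c : ℕ}
    (hqp : q ≤ p) (hF : F.order ≤ c) :
    F.weightedOrder (optionWeight p q) ≤ ((p * c : ℕ) : ℕ∞) := by
  have hF0 : F ≠ 0 := fun h0 => by simp [h0] at hF
  calc _ ≤ p * F.order := weightedOrder_le_mul_order (optionWeight_le hqp) hF0
    _ ≤ ((p * c : ℕ) : ℕ∞) := by push_cast; exact mul_le_mul_right hF _

variable [CommSemiring R]

theorem coeff_optionEquivLeft_symm (h : PowerSeries (MvPowerSeries σ R)) (d : Option σ →₀ ℕ) :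
    coeff d ((optionEquivLeft σ R).symm h) = coeff d.some (PowerSeries.coeff (d none) h) := by
  conv_rhs => rw [← AlgEquiv.apply_symm_apply (optionEquivLeft σ R) h,
    coeff_coeff_optionEquivLeft, Finsupp.optionElim_some]

theorem exists_coeff_optionElim_ne_zero {h : PowerSeries (MvPowerSeries σ R)} {j : ℕ}
    (hj : PowerSeries.coeff j h ≠ 0) :
    ∃ x : σ →₀ ℕ, coeff (x.optionElim j) ((optionEquivLeft σ R).symm h) ≠ 0 ∧
      (x.degree : ℕ∞) = (PowerSeries.coeff j h).order := by
  obtain ⟨x, hx, hdeg⟩ := exists_coeff_ne_zero_and_order (ne_zero_iff_order_finite.mp hj)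
  refine ⟨x, ?_, hdeg⟩
  rwa [coeff_optionEquivLeft_symm, Finsupp.optionElim_apply_none, Finsupp.some_optionElim]

theorem order_optionEquivLeft_symm (h : PowerSeries (MvPowerSeries σ R)) :
    ((optionEquivLeft σ R).symm h).order =
      ⨅ j : ℕ, (j : ℕ∞) + (PowerSeries.coeff j h).order := by
  apply le_antisymm
  · refine le_iInf fun j => ?_
    by_cases hj : PowerSeries.coeff j h = 0
    · simp [hj]
    obtain ⟨x, hx, hdeg⟩ := exists_coeff_optionElim_ne_zero hj
    calc _ ≤ ((x.optionElim j).degree : ℕ∞) := order_le hx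
      _ = j + (PowerSeries.coeff j h).order := by
        rw [Finsupp.degree_option, Finsupp.optionElim_apply_none, Finsupp.some_optionElim, ← hdeg]
        push_cast
        rfl
  · refine le_order fun d hd => ?_
    by_contra hne
    rw [coeff_optionEquivLeft_symm] at hne
    refine hd.not_ge ((iInf_le _ (d none)).trans ?_)
    rw [Finsupp.degree_option, Nat.cast_add]
    exact add_le_add_right (order_le hne) _

theorem le_weightedOrder_optionWeight_iff {h : PowerSeries (MvPowerSeries σ R)} {p q c : ℕ}
    (hq : q ≠ 0) :
    ((p * c : ℕ) : ℕ∞) ≤ ((optionEquivLeft σ R).symm h).weightedOrder (optionWeight p q) ↔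
      ∀ j < c, ((p * (c - j) : ℕ) : ℕ∞) ≤ q * (PowerSeries.coeff j h).order := by
  constructor
  · intro H j _
    by_cases h0 : PowerSeries.coeff j h = 0
    · simp [h0, hq]
    obtain ⟨x, hx, hdeg⟩ := exists_coeff_optionElim_ne_zero h0
    have hle : p * c ≤ p * j + q * x.degree := by
      have := H.trans (weightedOrder_le _ hx)
      rw [weight_optionWeight, Finsupp.optionElim_apply_none, Finsupp.some_optionElim] at this
      exact_mod_cast this
    rw [← hdeg]
    exact_mod_cast (show p * (c - j) ≤ q * x.degree by
      rwa [Nat.mul_sub, Nat.sub_le_iff_le_add'])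
  · intro H
    refine le_weightedOrder _ fun d hd => ?_
    by_contra hne
    rw [coeff_optionEquivLeft_symm] at hne
    refine hd.not_ge ?_
    rw [weight_optionWeight]
    by_cases hj : d none < c
    · have hle : ((p * (c - d none) : ℕ) : ℕ∞) ≤ (q * d.some.degree : ℕ) := by
        push_cast
        exact (H _ hj).trans (mul_le_mul_right (order_le hne) _)
      rw [Nat.cast_le, Nat.mul_sub, Nat.sub_le_iff_le_add'] at hle
      exact_mod_cast hle
    · exact_mod_cast (by nlinarith : p * c ≤ p * d none + q * d.some.degree)

end MvPowerSeries

theorem ordT_eq_order (h : PS K m) :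
    ordT h = ((MvPowerSeries.optionEquivLeft (Fin m) K).symm h).order := by
  simp [ordT, MvPowerSeries.order_optionEquivLeft_symm]

theorem le_eOrd_div_iff {h : PS K m} {p q c : ℕ} (hq : q ≠ 0) :
    (p : ℝ≥0∞) / q ≤ eOrd h c / c ↔
      ∀ j < c, ((p * (c - j) : ℕ) : ℕ∞) ≤ q * (PowerSeries.coeff j h).order := by
  rcases Nat.eq_zero_or_pos c with rfl | hc
  · simp [eOrd, ENNReal.top_div]
  have hc0 : (c : ℝ≥0∞) ≠ 0 := by exact_mod_cast hc.ne'
  rw [eOrd, ENNReal.iInf_div_of_ne hc0 (by simp), le_iInf_iff]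
  refine forall_congr' fun j => ?_
  rw [ENNReal.iInf_div_of_ne hc0 (by simp), le_iInf_iff]
  refine forall_congr' fun hj => ?_
  have hcancel : (c : ℝ≥0∞) / (c - j) * (PowerSeries.coeff j h).order / c =
      (PowerSeries.coeff j h).order / ((c - j : ℕ) : ℝ≥0∞) := by
    calc _ = (c * (c : ℝ≥0∞)⁻¹) * ((PowerSeries.coeff j h).order / (c - j)) := by
            simp only [div_eq_mul_inv]
            ring
      _ = _ := by rw [ENNReal.mul_inv_cancel hc0 (by simp), one_mul, ENNReal.natCast_sub]
  rw [hcancel, ENNReal.natCast_div_le_div_natCast_iff hq (Nat.sub_ne_zero_of_lt hj)]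

theorem le_eOrd_div_iff_le_weightedOrder {h : PS K m} {p q c : ℕ} (hq : q ≠ 0) :
    (p : ℝ≥0∞) / q ≤ eOrd h c / c ↔ ((p * c : ℕ) : ℕ∞) ≤
      ((MvPowerSeries.optionEquivLeft (Fin m) K).symm h).weightedOrder
        (MvPowerSeries.optionWeight p q) :=
  (le_eOrd_div_iff hq).trans (MvPowerSeries.le_weightedOrder_optionWeight_iff hq).symm

theorem one_le_eOrd_div {h : PS K m} {c : ℕ}
    (hc : (c : ℕ∞) ≤ ((MvPowerSeries.optionEquivLeft (Fin m) K).symm h).order) :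
    1 ≤ eOrd h c / c := by
  simpa using (le_eOrd_div_iff_le_weightedOrder (p := 1) one_ne_zero).mpr
    (by rwa [MvPowerSeries.optionWeight_one_one, one_mul])

theorem eOrd_mul_general (f g : PS K m) (cP cQ : ℕ) (hfo : ordT f = cP) (hgo : ordT g = cQ) :
    eOrd (f * g) (cP + cQ) / ((cP + cQ : ℕ) : ℝ≥0∞) =
      min (eOrd f cP / (cP : ℝ≥0∞)) (eOrd g cQ / (cQ : ℝ≥0∞)) := by
  set F := (MvPowerSeries.optionEquivLeft (Fin m) K).symm f
  set G := (MvPowerSeries.optionEquivLeft (Fin m) K).symm g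
  have hF : F.order = cP := by exact_mod_cast (ordT_eq_order f).symm.trans hfo
  have hG : G.order = cQ := by exact_mod_cast (ordT_eq_order g).symm.trans hgo
  have key : ∀ p q : ℕ, q ≠ 0 → q ≤ p →
      ((p : ℝ≥0∞) / q ≤ eOrd (f * g) (cP + cQ) / ((cP + cQ : ℕ) : ℝ≥0∞) ↔
        (p : ℝ≥0∞) / q ≤ min (eOrd f cP / (cP : ℝ≥0∞)) (eOrd g cQ / (cQ : ℝ≥0∞))) := by
    intro p q hq hqp
    rw [le_min_iff, le_eOrd_div_iff_le_weightedOrder hq, le_eOrd_div_iff_le_weightedOrder hq,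
      le_eOrd_div_iff_le_weightedOrder hq, map_mul, MvPowerSeries.weightedOrder_mul, Nat.mul_add]
    exact ENat.natCast_add_le_add_iff (MvPowerSeries.weightedOrder_optionWeight_le hqp hF.le)
      (MvPowerSeries.weightedOrder_optionWeight_le hqp hG.le)
  have hf1 : 1 ≤ eOrd f cP / cP := one_le_eOrd_div hF.ge
  have hg1 : 1 ≤ eOrd g cQ / cQ := one_le_eOrd_div hG.ge
  have hfg1 : 1 ≤ eOrd (f * g) (cP + cQ) / ((cP + cQ : ℕ) : ℝ≥0∞) := by
    simpa using (key 1 1 one_ne_zero le_rfl).mpr (by simpa using le_min hf1 hg1)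
  exact ENNReal.eq_of_forall_natCast_div_le_iff hfg1 (le_min hf1 hg1) key

/-- For nonzero `f, g ∈ K[[x, y]]` of orders `c_P`, `c_Q`, the normalized orders of the
projected Newton polyhedra satisfy `e_{fg}/(c_P+c_Q) = min{e_f/c_P, e_g/c_Q}`. -/
theorem eOrd_mul (f g : PS K m) (hf : f ≠ 0) (hg : g ≠ 0)
    (cP cQ : ℕ) (hcP : 0 < cP) (hcQ : 0 < cQ)
    (hfo : ordT f = cP) (hgo : ordT g = cQ) :
    eOrd (f * g) (cP + cQ) / ((cP + cQ : ℕ) : ℝ≥0∞) =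
      min (eOrd f cP / (cP : ℝ≥0∞)) (eOrd g cQ / (cQ : ℝ≥0∞)) :=
  eOrd_mul_general f g cP cQ hfo hgo

end
end

section
/- Let (R,m) be a regular local ring containing a field of characteristic zero, and let P be an ideal with 1 ≤ d = ord(P) < ∞. Then there exists a regular parameter x ∈ m (an osculating hypersurface V = {x=0}) such that the locus top(P) of points where P has order d is locally contained in V. (Local power-series version: for P ⊆ K[[x_1,...,x_n]], char K = 0, of order d ≥ 1, there is a formal coordinate change after which P contains an element f with ∂^{d−1}f/∂x_1^{d−1} a unit times x_1 plus higher order, and every point of a neighborhood where P has order d satisfies x_1 = 0.) -/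
open MvPolynomial

/-!
Translate `a` to the origin. If `m` is an exponent of degree `d` occurring in `f`, write
`m = eᵢ + m'` and differentiate along `m'` (a list `l` of `d - 1` variables). The coefficient of
`xᵢ` in `∂ˡf` is a positive integer multiple of the coefficient of `xᵐ` in `f`, hence nonzero in
characteristic zero, while the constant term of `∂ˡf` at any point `b` is a multiple of a
coefficient of degree `d - 1` of `f` at `b`, which vanishes as soon as `f` has order `≥ d` at `b`.
-/

theorem Multiset.toFinsupp_coe_cons {α : Type*} [DecidableEq α] (i : α) (l : List α) :
    Multiset.toFinsupp (↑(i :: l) : Multiset α) = Finsupp.single i 1 + Multiset.toFinsupp ↑l := by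
  rw [← Multiset.cons_coe, ← Multiset.singleton_add, Multiset.toFinsupp_add,
    Multiset.toFinsupp_singleton]

section Translation

variable {σ R : Type*} [CommSemiring R]

theorem pderiv_aeval_X_add_C (b : σ → R) (i : σ) (g : MvPolynomial σ R) :
    pderiv i (aeval (fun j => X j + C (b j)) g) = aeval (fun j => X j + C (b j)) (pderiv i g) := by
  classical
  induction g using MvPolynomial.induction_on with
  | C r => simp
  | add p q hp hq => simp only [map_add, hp, hq]
  | mul_X p j hp =>
    rw [map_mul, pderiv_mul, pderiv_mul, hp, aeval_X, map_add, map_add, map_mul]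
    by_cases h : i = j <;> simp [h]

theorem foldr_pderiv_aeval_X_add_C (b : σ → R) (l : List σ) (g : MvPolynomial σ R) :
    l.foldr (fun i p => pderiv i p) (aeval (fun j => X j + C (b j)) g) =
      aeval (fun j => X j + C (b j)) (l.foldr (fun i p => pderiv i p) g) := by
  induction l with
  | nil => rfl
  | cons i t ih => rw [List.foldr_cons, List.foldr_cons, ih, pderiv_aeval_X_add_C]

theorem constantCoeff_aeval_X_add_C (b : σ → R) (g : MvPolynomial σ R) :
    constantCoeff (aeval (fun j => X j + C (b j)) g) = eval b g := by
  induction g using MvPolynomial.induction_on with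
  | C r => simp
  | add p q hp hq => simp only [map_add, hp, hq]
  | mul_X p j hp => rw [map_mul, map_mul, map_mul, hp]; simp

theorem coeff_foldr_pderiv [DecidableEq σ] (l : List σ) (F : MvPolynomial σ R) (m : σ →₀ ℕ) :
    ∃ c : ℕ, c ≠ 0 ∧
      coeff m (l.foldr (fun i p => pderiv i p) F) = coeff (m + Multiset.toFinsupp ↑l) F * c := by
  induction l generalizing m with
  | nil => exact ⟨1, one_ne_zero, by simp⟩
  | cons i t ih =>
    obtain ⟨c, hc, hcoeff⟩ := ih (m + Finsupp.single i 1)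
    refine ⟨c * (m i + 1), by positivity, ?_⟩
    rw [List.foldr_cons, coeff_pderiv, hcoeff, Multiset.toFinsupp_coe_cons, add_assoc]
    push_cast
    ring

end Translation

section Order

variable {K : Type*} [Field K] {n : ℕ} {F : MvPolynomial (Fin n) K}

theorem polyOrd_le_degree {m : Fin n →₀ ℕ} (h : coeff m F ≠ 0) : polyOrd F ≤ m.degree :=
  sInf_le ⟨m, rfl, h⟩

theorem coeff_eq_zero_of_degree_lt_polyOrd {m : Fin n →₀ ℕ} (h : (m.degree : ℕ∞) < polyOrd F) :
    coeff m F = 0 := by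
  by_contra hm
  exact (polyOrd_le_degree hm).not_gt h

theorem le_polyOrd_of_forall {k : ℕ∞} (h : ∀ m : Fin n →₀ ℕ, coeff m F ≠ 0 → k ≤ m.degree) :
    k ≤ polyOrd F :=
  le_sInf fun _ ⟨m, hm, hc⟩ => hm ▸ h m hc

theorem exists_degree_eq_of_polyOrd_eq {d : ℕ} (h : polyOrd F = d) :
    ∃ m : Fin n →₀ ℕ, m.degree = d ∧ coeff m F ≠ 0 := by
  have hne : {e : ℕ∞ | ∃ m : Fin n →₀ ℕ, ↑(m.sum fun _ e => e) = e ∧ coeff m F ≠ 0}.Nonempty := by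
    by_contra hemp
    rw [Set.not_nonempty_iff_eq_empty] at hemp
    rw [polyOrd, hemp, sInf_empty] at h
    exact ENat.top_ne_natCast d h
  have hmem := csInf_mem hne
  rw [← polyOrd, h] at hmem
  obtain ⟨m, hm, hc⟩ := hmem
  exact ⟨m, Nat.cast_inj.mp hm, hc⟩

theorem polyOrd_eq_one (h0 : constantCoeff F = 0) {i : Fin n}
    (hi : coeff (Finsupp.single i 1) F ≠ 0) : polyOrd F = 1 := by
  refine le_antisymm (by simpa using polyOrd_le_degree hi) (le_polyOrd_of_forall fun m hm => ?_)
  have : m ≠ 0 := by rintro rfl; exact hm h0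
  exact_mod_cast Nat.one_le_iff_ne_zero.mpr ((Finsupp.degree_eq_zero_iff m).not.mpr this)

theorem coeff_zero_foldr_pderiv_of_length_lt_polyOrd {l : List (Fin n)}
    (h : (l.length : ℕ∞) < polyOrd F) : coeff 0 (l.foldr (fun i p => pderiv i p) F) = 0 := by
  obtain ⟨c, -, hc⟩ := coeff_foldr_pderiv l F 0
  rw [hc, zero_add, coeff_eq_zero_of_degree_lt_polyOrd, zero_mul]
  rwa [← Multiset.coe_card, ← Multiset.toFinsupp_sum_eq] at h

end Order

/-- Osculating hypersurfaces in characteristic zero.  Let `f` have order `d ≥ 1` at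
the point `a` over a field of characteristic zero.  Then some partial derivative `g`
of `f` of order `d−1` has order `1` at `a`, and the zero set of `g` (a regular
hypersurface) contains every point `b` where `f` has order `≥ d`: the top locus of `f`
is locally contained in the osculating hypersurface `{g = 0}`. -/
theorem osculating_hypersurface {K : Type*} [Field K] [CharZero K] {n : ℕ}
    (f : MvPolynomial (Fin n) K) (d : ℕ) (hd : 1 ≤ d) (a : Fin n → K)
    (hfa : polyOrdAt a f = d) :
    ∃ l : List (Fin n), l.length = d - 1 ∧
      polyOrdAt a (l.foldr (fun i p => MvPolynomial.pderiv i p) f) = 1 ∧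
      ∀ b : Fin n → K, (d : ℕ∞) ≤ polyOrdAt b f →
        MvPolynomial.eval b (l.foldr (fun i p => MvPolynomial.pderiv i p) f) = 0 := by
  obtain ⟨m, hmd, hm⟩ := exists_degree_eq_of_polyOrd_eq hfa
  have hlen : (Finsupp.toMultiset m).toList.length = d := by
    rw [Multiset.length_toList, Finsupp.card_toMultiset, ← hmd]; rfl
  obtain ⟨i, l, hil⟩ := List.exists_cons_of_length_pos (hlen ▸ hd)
  have hm_eq : Multiset.toFinsupp ↑(i :: l) = m := by
    rw [← hil, Multiset.coe_toList, Finsupp.toMultiset_toFinsupp]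
  rw [hil, List.length_cons] at hlen
  have hlt : (l.length : ℕ∞) < d := by exact_mod_cast Nat.lt_of_succ_le hlen.le
  refine ⟨l, by omega, ?_, fun b hb => ?_⟩
  · rw [polyOrdAt, ← foldr_pderiv_aeval_X_add_C]
    refine polyOrd_eq_one (i := i)
      (coeff_zero_foldr_pderiv_of_length_lt_polyOrd (hlt.trans_eq hfa.symm)) ?_
    obtain ⟨c, hc, hcoeff⟩ := coeff_foldr_pderiv l (aeval (fun j => X j + C (a j)) f)
      (Finsupp.single i 1)
    rw [hcoeff, ← Multiset.toFinsupp_coe_cons, hm_eq]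
    exact mul_ne_zero hm (Nat.cast_ne_zero.mpr hc)
  · rw [← constantCoeff_aeval_X_add_C, ← foldr_pderiv_aeval_X_add_C, constantCoeff_eq]
    exact coeff_zero_foldr_pderiv_of_length_lt_polyOrd (hlt.trans_le hb)
end
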